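/- arXiv:1009.0466 — 6 statements merged into one kernel-verified Lean document; each statement's English description precedes it below -/
import Mathlib

section
/- The monic polynomials Q_n satisfy the three-term recurrence of order three: z·Q_n(z) = Q_{n+1}(z) + a_n Q_{n-2}(z) for n ≥ 2, with initial conditions Q_j(z) = z^j for j = 0,1,2, where the recurrence coefficients are real and given by a_{2n} = (∫₀^α t^n Q_{2n} s₁ dt)/(∫₀^α t^{n-1} Q_{2n-2} s₁ dt) and a_{2n+1} = (∫₀^α t^n Q_{2n+1} f s₁ dt)/(∫₀^α t^{n-1} Q_{2n-1} f s₁ dt). -/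
open Complex Finset intervalIntegral Polynomial MeasureTheory Set

noncomputable section

/-- The primitive cube root of unity `e^{2πi/3}`. -/
def ω : ℂ := Complex.exp (2 * Real.pi * Complex.I / 3)

/-- Integral over the star `S₀ = ⋃_{k=0}^{2} ωᵏ[0,α]`: the sum of the three
ray integrals (with the parametrization `z = ωᵏ t`, `dz = ωᵏ dt`). -/
def starIntegral (α : ℝ) (g : ℂ → ℂ) : ℂ :=
  ∑ k ∈ Finset.range 3, ∫ t in (0:ℝ)..α, g (ω ^ k * (t : ℂ)) * ω ^ k

/-- The function `f(z) = z² ∫_{-b}^{-a} s₂(t)/(z³-t³) dt`. -/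
def fTrans (a b : ℝ) (s₂ : ℝ → ℝ) (z : ℂ) : ℂ :=
  z ^ 2 * ∫ t in (-b)..(-a), (s₂ t : ℂ) / (z ^ 3 - (t : ℂ) ^ 3)

/-- The multiple orthogonality conditions for `Q` at index `m`: orthogonality to
`tᵏ s₁(t)` for `k < ⌈m/2⌉` and to `tᵏ f(t)s₁(t)` for `k < ⌊m/2⌋` on `S₀`. -/
def OrthCond (α a b : ℝ) (s₁ : ℂ → ℂ) (s₂ : ℝ → ℝ) (Q : Polynomial ℂ) (m : ℕ) : Prop :=
  (∀ k < (m + 1) / 2, starIntegral α (fun z => Q.eval z * z ^ k * s₁ z) = 0) ∧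
  (∀ k < m / 2, starIntegral α (fun z => Q.eval z * z ^ k * fTrans a b s₂ z * s₁ z) = 0)

/-- `Q` is the monic polynomial of minimal degree satisfying the multiple
orthogonality conditions at index `m`. -/
def IsMOP (α a b : ℝ) (s₁ : ℂ → ℂ) (s₂ : ℝ → ℝ) (Q : Polynomial ℂ) (m : ℕ) : Prop :=
  Q.Monic ∧ OrthCond α a b s₁ s₂ Q m ∧
    ∀ R : Polynomial ℂ, R.Monic → OrthCond α a b s₁ s₂ R m → Q.degree ≤ R.degree

/-!
The orthogonality conditions are linear, so a monic polynomial of minimal degree satisfying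
them is unique among monic solutions of that degree: the difference of two, normalised, would
be a solution of smaller degree. By the rotational symmetry, the star integral of an integrand
`h` with `h (ω z) = ω ^ r h z` equals `3 ∫₀^α h` if `r ≡ 2 (mod 3)` and vanishes otherwise.
Inductively, `X Q_n - a_n Q_{n-2}` therefore satisfies every condition of index `n + 1`: each
one is inherited from `Q_n` and `Q_{n-2}` or forced by symmetry, except a single new one, which
is exactly what fixes `a_n`. The nonvanishing denominators say that `Q_n` violates the conditions
of index `n + 1`, which forces `deg Q_{n+1} = n + 1` and hence
`Q_{n+1} = X Q_n - a_n Q_{n-2}`. Since `Q_n`, `s₁` and `f` are real on `(0, α)`, so is `a_n`.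
-/

open scoped ComplexConjugate

lemma isPrimitiveRoot_omega : IsPrimitiveRoot ω 3 := by
  simpa [ω] using Complex.isPrimitiveRoot_exp 3 (by norm_num)

lemma sum_range_three_omega_pow_mul (c : ℕ) :
    ∑ j ∈ range 3, ω ^ (j * c) = if 3 ∣ c then 3 else 0 := by
  simp_rw [mul_comm _ c, pow_mul]
  split_ifs with hc
  · simp [(isPrimitiveRoot_omega.pow_eq_one_iff_dvd c).2 hc]
  · have hne : ω ^ c - 1 ≠ 0 :=
      sub_ne_zero.2 (mt (isPrimitiveRoot_omega.pow_eq_one_iff_dvd c).1 hc)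
    have hcube : (ω ^ c) ^ 3 = 1 := by
      rw [← pow_mul, mul_comm, pow_mul, isPrimitiveRoot_omega.pow_eq_one, one_pow]
    have hgeom := geom_sum_mul (ω ^ c) 3
    rw [hcube, sub_self] at hgeom
    exact (mul_eq_zero.1 hgeom).resolve_right hne

def OmegaHomogeneous (r : ℕ) (h : ℂ → ℂ) : Prop :=
  ∀ z, h (ω * z) = ω ^ r * h z

namespace OmegaHomogeneous

variable {r s : ℕ} {g h : ℂ → ℂ}

lemma mul (hg : OmegaHomogeneous r g) (hh : OmegaHomogeneous s h) :
    OmegaHomogeneous (r + s) (fun z => g z * h z) := fun z => by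
  simp only [hg z, hh z]; ring

lemma pow (k : ℕ) : OmegaHomogeneous k (fun z => z ^ k) := fun z => mul_pow ω z k

lemma apply_omega_pow_mul (hh : OmegaHomogeneous r h) (j : ℕ) (z : ℂ) :
    h (ω ^ j * z) = ω ^ (j * r) * h z := by
  induction j generalizing z with
  | zero => simp
  | succ j ih => rw [pow_succ', mul_assoc, hh, ih]; ring

end OmegaHomogeneous

lemma starIntegral_eq_of_omegaHomogeneous (α : ℝ) {h : ℂ → ℂ} {c : ℕ}
    (hh : OmegaHomogeneous c h) :
    starIntegral α h = (if 3 ∣ c + 1 then 3 else 0) * ∫ t in (0:ℝ)..α, h t := by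
  rw [starIntegral, ← sum_range_three_omega_pow_mul, Finset.sum_mul]
  refine Finset.sum_congr rfl fun j _ => ?_
  rw [← intervalIntegral.integral_const_mul]
  congr 1 with t
  rw [hh.apply_omega_pow_mul]; ring

section Weight

variable {α : ℝ} {w : ℂ → ℂ} {c : ℕ}

lemma intervalIntegrable_eval_mul_ray (hw : OmegaHomogeneous c w)
    (hwi : IntervalIntegrable (fun t : ℝ => w t) volume 0 α) (P : ℂ[X]) (j : ℕ) :
    IntervalIntegrable (fun t : ℝ => P.eval (ω ^ j * t) * w (ω ^ j * t) * ω ^ j) volume 0 α := by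
  have hcont : Continuous fun t : ℝ => P.eval (ω ^ j * t) * ω ^ (j * c) * ω ^ j := by fun_prop
  convert hwi.continuousOn_mul hcont.continuousOn using 2 with t
  rw [hw.apply_omega_pow_mul]; ring

lemma starIntegral_eval_add_mul (hw : OmegaHomogeneous c w)
    (hwi : IntervalIntegrable (fun t : ℝ => w t) volume 0 α) (P R : ℂ[X]) :
    starIntegral α (fun z => (P + R).eval z * w z) =
      starIntegral α (fun z => P.eval z * w z) + starIntegral α (fun z => R.eval z * w z) := by
  simp only [starIntegral, ← Finset.sum_add_distrib]
  refine Finset.sum_congr rfl fun j _ => ?_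
  rw [← intervalIntegral.integral_add (intervalIntegrable_eval_mul_ray hw hwi P j)
    (intervalIntegrable_eval_mul_ray hw hwi R j)]
  simp only [eval_add, add_mul]

lemma starIntegral_eval_C_mul_mul (x : ℂ) (P : ℂ[X]) :
    starIntegral α (fun z => (C x * P).eval z * w z) =
      x * starIntegral α (fun z => P.eval z * w z) := by
  simp only [starIntegral, Finset.mul_sum, ← intervalIntegral.integral_const_mul, eval_mul,
    eval_C, mul_assoc]

lemma starIntegral_eval_sub_mul (hw : OmegaHomogeneous c w)
    (hwi : IntervalIntegrable (fun t : ℝ => w t) volume 0 α) (P R : ℂ[X]) :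
    starIntegral α (fun z => (P - R).eval z * w z) =
      starIntegral α (fun z => P.eval z * w z) - starIntegral α (fun z => R.eval z * w z) := by
  rw [sub_eq_add_neg, ← neg_one_mul R, ← C_1, ← C_neg, starIntegral_eval_add_mul hw hwi,
    starIntegral_eval_C_mul_mul, neg_one_mul, ← sub_eq_add_neg]

lemma intervalIntegrable_pow_mul (hwi : IntervalIntegrable (fun t : ℝ => w t) volume 0 α)
    (k : ℕ) : IntervalIntegrable (fun t : ℝ => (t : ℂ) ^ k * w t) volume 0 α :=
  hwi.continuousOn_mul (by fun_prop)

lemma starIntegral_eval_X_mul_sub_C_mul (hw : OmegaHomogeneous c w)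
    (hwi : IntervalIntegrable (fun t : ℝ => w t) volume 0 α) (R₁ R₂ : ℂ[X]) (x : ℂ) (k : ℕ) :
    starIntegral α (fun z => (X * R₁ - C x * R₂).eval z * (z ^ k * w z)) =
      starIntegral α (fun z => R₁.eval z * (z ^ (k + 1) * w z)) -
        x * starIntegral α (fun z => R₂.eval z * (z ^ k * w z)) := by
  rw [starIntegral_eval_sub_mul ((OmegaHomogeneous.pow k).mul hw)
      (intervalIntegrable_pow_mul hwi k),
    starIntegral_eval_C_mul_mul]
  congr 2 with z
  rw [eval_mul, eval_X]; ring

lemma starIntegral_eval_mul_pow_mul {P : ℂ[X]} {r : ℕ} (hP : OmegaHomogeneous r P.eval)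
    (hw : OmegaHomogeneous c w) (k : ℕ) :
    starIntegral α (fun z => P.eval z * (z ^ k * w z)) =
      (if 3 ∣ r + k + c + 1 then 3 else 0) *
        ∫ t in (0:ℝ)..α, (t : ℂ) ^ k * P.eval (t : ℂ) * w t := by
  rw [starIntegral_eq_of_omegaHomogeneous α (hP.mul ((OmegaHomogeneous.pow k).mul hw)),
    ← add_assoc]
  congr 2 with t
  ring

end Weight

lemma conj_intervalIntegral_of_conj_eq {α : ℝ} (hα : 0 ≤ α) {g : ℝ → ℂ}
    (hg : ∀ t ∈ Ioo 0 α, conj (g t) = g t) :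
    conj (∫ t in (0:ℝ)..α, g t) = ∫ t in (0:ℝ)..α, g t := by
  rw [intervalIntegral.integral_of_le hα, integral_Ioc_eq_integral_Ioo, ← integral_conj]
  exact setIntegral_congr_fun measurableSet_Ioo hg

section fTrans

open Filter Topology

variable {a b : ℝ} {s₂ : ℝ → ℝ}

lemma omegaHomogeneous_fTrans : OmegaHomogeneous 2 (fTrans a b s₂) := fun z => by
  simp only [fTrans, mul_pow, isPrimitiveRoot_omega.pow_eq_one, one_mul]; ring

lemma conj_fTrans_ofReal (t : ℝ) : conj (fTrans a b s₂ t) = fTrans a b s₂ t := by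
  simp only [fTrans, map_mul, map_pow, Complex.conj_ofReal, ← intervalIntegral_conj, map_div₀,
    map_sub]

lemma seven_eighths_mul_cube_le {t u : ℝ} (ht : -(a / 2) < t) (hu : u ≤ -a) :
    7 / 8 * a ^ 3 ≤ t ^ 3 - u ^ 3 := by
  have hmono := (Odd.strictMono_pow (R := ℝ) (by decide : Odd 3)).monotone
  have h₁ := hmono ht.le
  have h₂ := hmono hu
  simp only at h₁ h₂
  linarith

lemma continuousAt_fTrans_ofReal (ha : 0 < a) (hab : a < b)
    (hs₂ : IntervalIntegrable s₂ volume (-b) (-a)) {t₀ : ℝ} (ht₀ : -(a / 2) < t₀) :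
    ContinuousAt (fun t : ℝ => fTrans a b s₂ t) t₀ := by
  have hIoc : uIoc (-b) (-a) = Ioc (-b) (-a) := uIoc_of_le (by linarith)
  have hcube_pos : 0 < 7 / 8 * a ^ 3 := by positivity
  have hcast (t u : ℝ) : (t : ℂ) ^ 3 - (u : ℂ) ^ 3 = ((t ^ 3 - u ^ 3 : ℝ) : ℂ) := by push_cast; ring
  have hnear : ∀ᶠ t in 𝓝 t₀, -(a / 2) < t := eventually_gt_nhds ht₀
  refine ((continuous_ofReal.pow 2).continuousAt).mul ?_
  apply intervalIntegral.continuousAt_of_dominated_interval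
    (bound := fun u => |s₂ u| * (7 / 8 * a ^ 3)⁻¹)
  · refine Eventually.of_forall fun t => ?_
    have hden : Continuous fun u : ℝ => (t : ℂ) ^ 3 - (u : ℂ) ^ 3 := by fun_prop
    exact (continuous_ofReal.comp_aestronglyMeasurable hs₂.def'.aestronglyMeasurable).div₀
      hden.aestronglyMeasurable
  · filter_upwards [hnear] with t ht
    refine Eventually.of_forall fun u hu => ?_
    rw [hIoc] at hu
    have hlow := seven_eighths_mul_cube_le ht hu.2
    rw [hcast, norm_div, Complex.norm_real, Complex.norm_real, Real.norm_eq_abs,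
      Real.norm_eq_abs, abs_of_pos (hcube_pos.trans_le hlow), div_eq_mul_inv]
    exact mul_le_mul_of_nonneg_left (inv_anti₀ hcube_pos hlow) (abs_nonneg _)
  · exact hs₂.abs.mul_const _
  · refine Eventually.of_forall fun u hu => ?_
    rw [hIoc] at hu
    have hlow := seven_eighths_mul_cube_le ht₀ hu.2
    refine continuousAt_const.div (by fun_prop) ?_
    rw [hcast]
    exact_mod_cast (hcube_pos.trans_le hlow).ne'

end fTrans

section MinimalMonic

variable {K : Type*} [Field K]

def IsMinimalMonic (S : K[X] → Prop) (Q : K[X]) : Prop :=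
  Q.Monic ∧ S Q ∧ ∀ R : K[X], R.Monic → S R → Q.degree ≤ R.degree

lemma IsMinimalMonic.eq_of_natDegree_le {S : K[X] → Prop}
    (hS : ∀ P R (x : K), S P → S R → S (C x * (P - R))) {Q R : K[X]}
    (hQ : IsMinimalMonic S Q) (hR : R.Monic) (hRS : S R) (hle : R.natDegree ≤ Q.natDegree) :
    R = Q := by
  by_contra hne
  have hQR : Q.natDegree = R.natDegree :=
    le_antisymm (natDegree_le_natDegree (hQ.2.2 R hR hRS)) hle
  have hlt : (Q - R).degree < Q.degree := by
    refine degree_sub_lt_left ?_ hQ.1.ne_zero (by rw [hQ.1.leadingCoeff, hR.leadingCoeff])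
    rw [degree_eq_natDegree hQ.1.ne_zero, degree_eq_natDegree hR.ne_zero, hQR]
  have hlc : (Q - R).leadingCoeff ≠ 0 := leadingCoeff_ne_zero.2 (sub_ne_zero.2 (Ne.symm hne))
  have hmin := hQ.2.2 _ (monic_C_mul_of_mul_leadingCoeff_eq_one (inv_mul_cancel₀ hlc))
    (hS Q R _ hQ.2.1 hRS)
  rw [degree_C_mul (inv_ne_zero hlc)] at hmin
  exact (hmin.trans_lt hlt).false

lemma eq_of_isMinimalMonic_succ {S : ℕ → K[X] → Prop}
    (hS : ∀ m P R (x : K), S m P → S m R → S m (C x * (P - R))) (hanti : Antitone S)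
    {Q : ℕ → K[X]} (hQ : ∀ m, IsMinimalMonic (S m) (Q m)) {n : ℕ}
    (hdeg : ∀ j ≤ n, (Q j).natDegree = j) (hQn : ¬ S (n + 1) (Q n)) {P : K[X]} (hP : P.Monic)
    (hPS : S (n + 1) P) (hPdeg : P.natDegree = n + 1) : Q (n + 1) = P := by
  have hlow : n + 1 ≤ (Q (n + 1)).natDegree := by
    by_contra! hlt
    obtain ⟨d, hd⟩ : ∃ d, (Q (n + 1)).natDegree = d := ⟨_, rfl⟩
    have hQd : Q (n + 1) = Q d := (hQ d).eq_of_natDegree_le (hS d) (hQ (n + 1)).1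
      (hanti (by omega) _ (hQ (n + 1)).2.1) (by rw [hd, hdeg d (by omega)])
    have hQdS : S (n + 1) (Q d) := hQd ▸ (hQ (n + 1)).2.1
    rcases (show d ≤ n by omega).lt_or_eq with hdn | rfl
    · have hmin := natDegree_le_natDegree ((hQ (d + 1)).2.2 _ (hQ d).1 (hanti (by omega) _ hQdS))
      rw [hdeg _ hdn, hdeg _ hdn.le] at hmin
      omega
    · exact hQn hQdS
  have hle := natDegree_le_natDegree ((hQ (n + 1)).2.2 P hP hPS)
  exact ((hQ (n + 1)).eq_of_natDegree_le (hS _) hP hPS (by omega)).symm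

end MinimalMonic

section OrthCond

variable {α a b : ℝ} {s₁ : ℂ → ℂ} {s₂ : ℝ → ℝ}

lemma intervalIntegrable_fTrans_mul (hα : 0 ≤ α) (ha : 0 < a) (hab : a < b)
    (hs₂ : IntervalIntegrable s₂ volume (-b) (-a))
    (hs₁i : IntervalIntegrable (fun t : ℝ => s₁ t) volume 0 α) :
    IntervalIntegrable (fun t : ℝ => fTrans a b s₂ t * s₁ t) volume 0 α := by
  refine hs₁i.continuousOn_mul fun t ht => ?_
  rw [uIcc_of_le hα] at ht
  exact (continuousAt_fTrans_ofReal ha hab hs₂ (by linarith [ht.1])).continuousWithinAt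

lemma orthCond_iff {Q : ℂ[X]} {m : ℕ} :
    OrthCond α a b s₁ s₂ Q m ↔
      (∀ k < (m + 1) / 2, starIntegral α (fun z => Q.eval z * (z ^ k * s₁ z)) = 0) ∧
      ∀ k < m / 2, starIntegral α (fun z => Q.eval z * (z ^ k * (fTrans a b s₂ z * s₁ z))) = 0 := by
  simp only [OrthCond, mul_assoc]

lemma antitone_orthCond : Antitone fun m => (OrthCond α a b s₁ s₂ · m) := by
  intro m m' hmm' R hR
  exact ⟨fun k hk => hR.1 k (by omega), fun k hk => hR.2 k (by omega)⟩

lemma orthCond_C_mul_sub (hs₁ : OmegaHomogeneous 2 s₁)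
    (hs₁i : IntervalIntegrable (fun t : ℝ => s₁ t) volume 0 α)
    (hfi : IntervalIntegrable (fun t : ℝ => fTrans a b s₂ t * s₁ t) volume 0 α)
    (m : ℕ) (P R : ℂ[X]) (x : ℂ) (hP : OrthCond α a b s₁ s₂ P m)
    (hR : OrthCond α a b s₁ s₂ R m) : OrthCond α a b s₁ s₂ (C x * (P - R)) m := by
  rw [orthCond_iff] at hP hR ⊢
  refine ⟨fun k hk => ?_, fun k hk => ?_⟩
  · rw [starIntegral_eval_C_mul_mul, starIntegral_eval_sub_mul ((OmegaHomogeneous.pow k).mul hs₁)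
      (intervalIntegrable_pow_mul hs₁i k), hP.1 k hk, hR.1 k hk, sub_zero, mul_zero]
  · rw [starIntegral_eval_C_mul_mul, starIntegral_eval_sub_mul
      ((OmegaHomogeneous.pow k).mul (omegaHomogeneous_fTrans.mul hs₁))
      (intervalIntegrable_pow_mul (w := fun z => fTrans a b s₂ z * s₁ z) hfi k), hP.2 k hk,
      hR.2 k hk, sub_zero, mul_zero]

lemma OrthCond.starIntegral_eq_zero_fst (hs₁ : OmegaHomogeneous 2 s₁) {R : ℂ[X]} {m r k : ℕ}
    (h : OrthCond α a b s₁ s₂ R m) (hR : OmegaHomogeneous r R.eval)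
    (hk : k < (m + 1) / 2 ∨ ¬ 3 ∣ r + k + 3) :
    starIntegral α (fun z => R.eval z * (z ^ k * s₁ z)) = 0 := by
  rcases hk with hk | hk
  · exact (orthCond_iff.1 h).1 k hk
  · rw [starIntegral_eval_mul_pow_mul hR hs₁, if_neg (by omega), zero_mul]

lemma OrthCond.starIntegral_eq_zero_snd (hs₁ : OmegaHomogeneous 2 s₁) {R : ℂ[X]} {m r k : ℕ}
    (h : OrthCond α a b s₁ s₂ R m) (hR : OmegaHomogeneous r R.eval)
    (hk : k < m / 2 ∨ ¬ 3 ∣ r + k + 5) :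
    starIntegral α (fun z => R.eval z * (z ^ k * (fTrans a b s₂ z * s₁ z))) = 0 := by
  rcases hk with hk | hk
  · exact (orthCond_iff.1 h).2 k hk
  · rw [starIntegral_eval_mul_pow_mul hR (omegaHomogeneous_fTrans.mul hs₁), if_neg (by omega),
      zero_mul]

lemma orthCond_X_pow (hs₁ : OmegaHomogeneous 2 s₁) {j : ℕ} (hj : j ≤ 2) :
    OrthCond α a b s₁ s₂ (X ^ j) j := by
  have hX : OmegaHomogeneous j (X ^ j : ℂ[X]).eval := by
    simpa only [eval_pow, eval_X] using OmegaHomogeneous.pow j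
  rw [orthCond_iff]
  refine ⟨fun k hk => ?_, fun k hk => ?_⟩
  · rw [starIntegral_eval_mul_pow_mul hX hs₁, if_neg (by omega), zero_mul]
  · rw [starIntegral_eval_mul_pow_mul hX (omegaHomogeneous_fTrans.mul hs₁), if_neg (by omega),
      zero_mul]

lemma OrthCond.X_mul_sub_C_mul (hs₁ : OmegaHomogeneous 2 s₁)
    (hs₁i : IntervalIntegrable (fun t : ℝ => s₁ t) volume 0 α)
    (hfi : IntervalIntegrable (fun t : ℝ => fTrans a b s₂ t * s₁ t) volume 0 α)
    {R₁ R₂ : ℂ[X]} {n : ℕ} (hn : 2 ≤ n) (h₁ : OrthCond α a b s₁ s₂ R₁ n)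
    (h₂ : OrthCond α a b s₁ s₂ R₂ (n - 2)) (hR₁ : OmegaHomogeneous n R₁.eval)
    (hR₂ : OmegaHomogeneous (n - 2) R₂.eval) {x : ℂ}
    (hx₁ : ∀ k, n = 2 * (k + 1) →
      starIntegral α (fun z => R₁.eval z * (z ^ (k + 1) * s₁ z)) =
        x * starIntegral α (fun z => R₂.eval z * (z ^ k * s₁ z)))
    (hx₂ : ∀ k, n = 2 * (k + 1) + 1 →
      starIntegral α (fun z => R₁.eval z * (z ^ (k + 1) * (fTrans a b s₂ z * s₁ z))) =
        x * starIntegral α (fun z => R₂.eval z * (z ^ k * (fTrans a b s₂ z * s₁ z)))) :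
    OrthCond α a b s₁ s₂ (X * R₁ - C x * R₂) (n + 1) := by
  rw [orthCond_iff]
  refine ⟨fun k hk => ?_, fun k hk => ?_⟩
  · rw [starIntegral_eval_X_mul_sub_C_mul hs₁ hs₁i, sub_eq_zero]
    -- every condition except the new one is inherited from `R₁`, `R₂` or forced by symmetry
    by_cases hnk : n = 2 * (k + 1)
    · exact hx₁ k hnk
    · rw [h₁.starIntegral_eq_zero_fst hs₁ hR₁ (by omega),
        h₂.starIntegral_eq_zero_fst hs₁ hR₂ (by omega), mul_zero]
  · rw [starIntegral_eval_X_mul_sub_C_mul (w := fun z => fTrans a b s₂ z * s₁ z)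
      (omegaHomogeneous_fTrans.mul hs₁) hfi, sub_eq_zero]
    by_cases hnk : n = 2 * (k + 1) + 1
    · exact hx₂ k hnk
    · rw [h₁.starIntegral_eq_zero_snd hs₁ hR₁ (by omega),
        h₂.starIntegral_eq_zero_snd hs₁ hR₂ (by omega), mul_zero]

end OrthCond

lemma Polynomial.Monic.X_mul_sub_C_mul {R : Type*} [CommRing R] [Nontrivial R] {P₁ P₂ : R[X]}
    (h₁ : P₁.Monic) (h₂ : P₂.natDegree ≤ P₁.natDegree) (x : R) :
    (X * P₁ - C x * P₂).Monic ∧ (X * P₁ - C x * P₂).natDegree = P₁.natDegree + 1 := by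
  have hX : (X * P₁).natDegree = P₁.natDegree + 1 := natDegree_X_mul h₁.ne_zero
  have hlt : (C x * P₂).natDegree < (X * P₁).natDegree := by
    have := natDegree_C_mul_le x P₂
    omega
  exact ⟨(monic_X.mul h₁).sub_of_left (degree_lt_degree hlt),
    by rw [natDegree_sub_eq_left_of_natDegree_lt hlt, hX]⟩

lemma OmegaHomogeneous.X_mul_sub_C_mul {P₁ P₂ : ℂ[X]} {n : ℕ} (hn : 2 ≤ n)
    (h₁ : OmegaHomogeneous n P₁.eval) (h₂ : OmegaHomogeneous (n - 2) P₂.eval) (x : ℂ) :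
    OmegaHomogeneous (n + 1) (X * P₁ - C x * P₂).eval := fun z => by
  obtain ⟨m, rfl⟩ : ∃ m, n = m + 2 := ⟨n - 2, by omega⟩
  rw [Nat.add_sub_cancel] at h₂
  have hω : ω ^ (m + 3) = ω ^ m := by rw [pow_add, isPrimitiveRoot_omega.pow_eq_one, mul_one]
  simp only [eval_sub, eval_mul, eval_X, eval_C, h₁ z, h₂ z]
  linear_combination (x * eval z P₂) * hω

lemma conj_eval_X_mul_sub_C_mul {P₁ P₂ : ℂ[X]}
    (h₁ : ∀ t : ℝ, conj (P₁.eval (t : ℂ)) = P₁.eval (t : ℂ))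
    (h₂ : ∀ t : ℝ, conj (P₂.eval (t : ℂ)) = P₂.eval (t : ℂ)) {x : ℂ} (hx : conj x = x) (t : ℝ) :
    conj ((X * P₁ - C x * P₂).eval (t : ℂ)) = (X * P₁ - C x * P₂).eval (t : ℂ) := by
  simp only [eval_sub, eval_mul, eval_X, eval_C, map_sub, map_mul, Complex.conj_ofReal, h₁, h₂, hx]

section MultipleOrthogonal

variable {α a b : ℝ} {s₁ : ℂ → ℂ} {s₂ : ℝ → ℝ} {Q : ℕ → ℂ[X]}

def DenominatorsNeZero (α a b : ℝ) (s₁ : ℂ → ℂ) (s₂ : ℝ → ℝ) (Q : ℕ → ℂ[X]) : Prop :=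
  ∀ m : ℕ, 1 ≤ m →
    (∫ t in (0:ℝ)..α, (t : ℂ) ^ (m - 1) * (Q (2 * m - 2)).eval (t : ℂ) * s₁ (t : ℂ)) ≠ 0 ∧
    (∫ t in (0:ℝ)..α, (t : ℂ) ^ (m - 1) * (Q (2 * m - 1)).eval (t : ℂ) *
      fTrans a b s₂ (t : ℂ) * s₁ (t : ℂ)) ≠ 0

def recCoeff (α a b : ℝ) (s₁ : ℂ → ℂ) (s₂ : ℝ → ℝ) (Q : ℕ → ℂ[X]) (n : ℕ) : ℂ :=
  if n % 2 = 0 then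
    (∫ t in (0:ℝ)..α, (t : ℂ) ^ (n / 2) * (Q n).eval (t : ℂ) * s₁ t) /
      ∫ t in (0:ℝ)..α, (t : ℂ) ^ (n / 2 - 1) * (Q (n - 2)).eval (t : ℂ) * s₁ t
  else
    (∫ t in (0:ℝ)..α, (t : ℂ) ^ (n / 2) * (Q n).eval (t : ℂ) * fTrans a b s₂ t * s₁ t) /
      ∫ t in (0:ℝ)..α, (t : ℂ) ^ (n / 2 - 1) * (Q (n - 2)).eval (t : ℂ) * fTrans a b s₂ t * s₁ t

lemma conj_recCoeff (hα : 0 ≤ α) (hs₁real : ∀ t ∈ Ioo 0 α, conj (s₁ t) = s₁ t) {n : ℕ}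
    (hQn : ∀ t : ℝ, conj ((Q n).eval (t : ℂ)) = (Q n).eval (t : ℂ))
    (hQn₂ : ∀ t : ℝ, conj ((Q (n - 2)).eval (t : ℂ)) = (Q (n - 2)).eval (t : ℂ)) :
    conj (recCoeff α a b s₁ s₂ Q n) = recCoeff α a b s₁ s₂ Q n := by
  have hreal (F : ℝ → ℂ) (hF : ∀ t, conj (F t) = F t) :
      conj (∫ t in (0:ℝ)..α, F t * s₁ t) = ∫ t in (0:ℝ)..α, F t * s₁ t :=
    conj_intervalIntegral_of_conj_eq hα fun t ht => by rw [map_mul, hF, hs₁real t ht]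
  unfold recCoeff
  split_ifs <;> rw [map_div₀, hreal, hreal] <;> intro t <;>
    simp only [map_mul, map_pow, Complex.conj_ofReal, conj_fTrans_ofReal, hQn, hQn₂]

lemma not_orthCond_succ (hs₁ : OmegaHomogeneous 2 s₁)
    (hden : DenominatorsNeZero α a b s₁ s₂ Q)
    {n : ℕ} (hn : OmegaHomogeneous n (Q n).eval) : ¬ OrthCond α a b s₁ s₂ (Q n) (n + 1) := by
  rw [orthCond_iff]
  rintro ⟨h₁, h₂⟩
  obtain ⟨m, rfl | rfl⟩ := Nat.even_or_odd' n
  · have h := h₁ m (by omega)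
    rw [starIntegral_eval_mul_pow_mul hn hs₁, if_pos (by omega), mul_eq_zero] at h
    refine (hden (m + 1) (by omega)).1 ?_
    rw [show 2 * (m + 1) - 2 = 2 * m by omega, Nat.add_sub_cancel]
    simpa only [three_ne_zero, false_or] using h
  · have h := h₂ m (by omega)
    rw [starIntegral_eval_mul_pow_mul hn (omegaHomogeneous_fTrans.mul hs₁), if_pos (by omega),
      mul_eq_zero] at h
    refine (hden (m + 1) (by omega)).2 ?_
    rw [show 2 * (m + 1) - 1 = 2 * m + 1 by omega, Nat.add_sub_cancel]
    simpa only [mul_assoc, three_ne_zero, false_or] using h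

lemma eq_X_pow (hs₁ : OmegaHomogeneous 2 s₁)
    (hs₁i : IntervalIntegrable (fun t : ℝ => s₁ t) volume 0 α)
    (hfi : IntervalIntegrable (fun t : ℝ => fTrans a b s₂ t * s₁ t) volume 0 α)
    (hQ : ∀ m, IsMOP α a b s₁ s₂ (Q m) m)
    (hden : DenominatorsNeZero α a b s₁ s₂ Q)
    {j : ℕ} (hj : j ≤ 2) : Q j = X ^ j := by
  have hS := orthCond_C_mul_sub hs₁ hs₁i hfi
  induction j using Nat.strong_induction_on with
  | _ j ih =>
  rcases j with _ | i
  · exact (IsMinimalMonic.eq_of_natDegree_le (hS 0) (hQ 0) (monic_X_pow 0)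
      (orthCond_X_pow hs₁ hj) (by simp)).symm
  · have hXi : OmegaHomogeneous i (Q i).eval := by
      simpa only [ih i (by omega) (by omega), eval_pow, eval_X] using OmegaHomogeneous.pow i
    refine eq_of_isMinimalMonic_succ hS antitone_orthCond hQ (fun j hj => ?_)
      (not_orthCond_succ hs₁ hden hXi) (monic_X_pow _) (orthCond_X_pow hs₁ hj) (natDegree_X_pow _)
    rw [ih j (by omega) (by omega), natDegree_X_pow]

lemma eq_X_mul_sub_recCoeff (hs₁ : OmegaHomogeneous 2 s₁)
    (hs₁i : IntervalIntegrable (fun t : ℝ => s₁ t) volume 0 α)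
    (hfi : IntervalIntegrable (fun t : ℝ => fTrans a b s₂ t * s₁ t) volume 0 α)
    (hQ : ∀ m, IsMOP α a b s₁ s₂ (Q m) m)
    (hden : DenominatorsNeZero α a b s₁ s₂ Q)
    {n : ℕ} (hn : 2 ≤ n) (hdeg : ∀ j ≤ n, (Q j).natDegree = j)
    (hhom : ∀ j ≤ n, OmegaHomogeneous j (Q j).eval) :
    Q (n + 1) = X * Q n - C (recCoeff α a b s₁ s₂ Q n) * Q (n - 2) := by
  have hS := orthCond_C_mul_sub hs₁ hs₁i hfi
  have hn₁ := hhom n le_rfl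
  have hn₂ := hhom (n - 2) (by omega)
  obtain ⟨hPm, hPdeg⟩ := (hQ n).1.X_mul_sub_C_mul (P₂ := Q (n - 2))
    (by rw [hdeg n le_rfl, hdeg _ (by omega)]; omega) (recCoeff α a b s₁ s₂ Q n)
  refine eq_of_isMinimalMonic_succ hS antitone_orthCond hQ hdeg (not_orthCond_succ hs₁ hden hn₁)
    hPm ((hQ n).2.1.X_mul_sub_C_mul hs₁ hs₁i hfi hn (hQ (n - 2)).2.1 hn₁ hn₂ ?_ ?_)
    (by rw [hPdeg, hdeg n le_rfl])
  · rintro k rfl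
    have hD := (hden (k + 1) (by omega)).1
    rw [Nat.add_sub_cancel] at hD
    rw [starIntegral_eval_mul_pow_mul hn₁ hs₁, starIntegral_eval_mul_pow_mul hn₂ hs₁,
      if_pos (by omega), if_pos (by omega), recCoeff, if_pos (by omega),
      show 2 * (k + 1) / 2 = k + 1 by omega, Nat.add_sub_cancel]
    field_simp
  · rintro k rfl
    have hD := (hden (k + 1) (by omega)).2
    rw [show 2 * (k + 1) - 1 = 2 * (k + 1) + 1 - 2 by omega, Nat.add_sub_cancel] at hD
    rw [starIntegral_eval_mul_pow_mul hn₁ (omegaHomogeneous_fTrans.mul hs₁),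
      starIntegral_eval_mul_pow_mul hn₂ (omegaHomogeneous_fTrans.mul hs₁),
      if_pos (by omega), if_pos (by omega), recCoeff, if_neg (by omega),
      show (2 * (k + 1) + 1) / 2 = k + 1 by omega, Nat.add_sub_cancel]
    simp only [← mul_assoc] at hD ⊢
    field_simp

lemma natDegree_omegaHomogeneous_conj (hα : 0 ≤ α) (hs₁real : ∀ t ∈ Ioo 0 α, conj (s₁ t) = s₁ t)
    (hs₁ : OmegaHomogeneous 2 s₁)
    (hs₁i : IntervalIntegrable (fun t : ℝ => s₁ t) volume 0 α)
    (hfi : IntervalIntegrable (fun t : ℝ => fTrans a b s₂ t * s₁ t) volume 0 α)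
    (hQ : ∀ m, IsMOP α a b s₁ s₂ (Q m) m)
    (hden : DenominatorsNeZero α a b s₁ s₂ Q)
    (n : ℕ) :
    (Q n).natDegree = n ∧ OmegaHomogeneous n (Q n).eval ∧
      ∀ t : ℝ, conj ((Q n).eval (t : ℂ)) = (Q n).eval (t : ℂ) := by
  induction n using Nat.strong_induction_on with
  | _ n ih =>
  rcases le_or_gt n 2 with hn | hn
  · rw [eq_X_pow hs₁ hs₁i hfi hQ hden hn]
    refine ⟨natDegree_X_pow n, ?_, fun t => ?_⟩
    · simpa only [eval_pow, eval_X] using OmegaHomogeneous.pow n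
    · simp only [eval_pow, eval_X, map_pow, Complex.conj_ofReal]
  obtain ⟨n, rfl⟩ : ∃ m, n = m + 1 := ⟨n - 1, by omega⟩
  obtain ⟨hd₁, hh₁, hc₁⟩ := ih n (by omega)
  obtain ⟨hd₂, hh₂, hc₂⟩ := ih (n - 2) (by omega)
  rw [eq_X_mul_sub_recCoeff hs₁ hs₁i hfi hQ hden (by omega) (fun j _ => (ih j (by omega)).1)
    (fun j _ => (ih j (by omega)).2.1)]
  refine ⟨?_, hh₁.X_mul_sub_C_mul (by omega) hh₂ _,
    conj_eval_X_mul_sub_C_mul hc₁ hc₂ (conj_recCoeff hα hs₁real hc₁ hc₂)⟩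
  rw [((hQ n).1.X_mul_sub_C_mul (by omega) _).2, hd₁]

end MultipleOrthogonal

theorem statement5_general (α a b : ℝ) (hα : 0 < α) (ha : 0 < a) (hab : a < b)
    (s₁ : ℂ → ℂ) (s₂ : ℝ → ℝ)
    (hs₁sym : ∀ z : ℂ, s₁ (ω * z) = ω ^ 2 * s₁ z)
    (hs₁real : ∀ t : ℝ, t ∈ Set.Ioo 0 α → ∃ r : ℝ, 0 ≤ r ∧ s₁ (t : ℂ) = (r : ℂ))
    (hs₁int : IntervalIntegrable (fun t : ℝ => s₁ (t : ℂ)) volume 0 α)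
    (hs₂int : IntervalIntegrable s₂ volume (-b) (-a))
    (Q : ℕ → Polynomial ℂ) (hQ : ∀ m, IsMOP α a b s₁ s₂ (Q m) m)
    (hden : ∀ m : ℕ, 1 ≤ m →
      (∫ t in (0:ℝ)..α, (t : ℂ) ^ (m - 1) * (Q (2 * m - 2)).eval (t : ℂ) * s₁ (t : ℂ)) ≠ 0 ∧
      (∫ t in (0:ℝ)..α, (t : ℂ) ^ (m - 1) * (Q (2 * m - 1)).eval (t : ℂ) *
        fTrans a b s₂ (t : ℂ) * s₁ (t : ℂ)) ≠ 0) :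
    (∀ j : ℕ, j ≤ 2 → Q j = Polynomial.X ^ j) ∧
    (∀ n : ℕ, 2 ≤ n → ∃ an : ℝ,
      Polynomial.X * Q n = Q (n + 1) + Polynomial.C (an : ℂ) * Q (n - 2) ∧
      (∀ m : ℕ, n = 2 * m →
        (an : ℂ) = (∫ t in (0:ℝ)..α, (t : ℂ) ^ m * (Q n).eval (t : ℂ) * s₁ (t : ℂ)) /
          (∫ t in (0:ℝ)..α, (t : ℂ) ^ (m - 1) * (Q (n - 2)).eval (t : ℂ) * s₁ (t : ℂ))) ∧
      (∀ m : ℕ, n = 2 * m + 1 →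
        (an : ℂ) = (∫ t in (0:ℝ)..α, (t : ℂ) ^ m * (Q n).eval (t : ℂ) *
            fTrans a b s₂ (t : ℂ) * s₁ (t : ℂ)) /
          (∫ t in (0:ℝ)..α, (t : ℂ) ^ (m - 1) * (Q (n - 2)).eval (t : ℂ) *
            fTrans a b s₂ (t : ℂ) * s₁ (t : ℂ)))) := by
  have hfi := intervalIntegrable_fTrans_mul hα.le ha hab hs₂int hs₁int
  have hs₁conj : ∀ t ∈ Ioo 0 α, conj (s₁ t) = s₁ t := fun t ht => by
    obtain ⟨r, -, hr⟩ := hs₁real t ht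
    rw [hr, Complex.conj_ofReal]
  have hQn := natDegree_omegaHomogeneous_conj hα.le hs₁conj hs₁sym hs₁int hfi hQ hden
  refine ⟨fun j => eq_X_pow hs₁sym hs₁int hfi hQ hden, fun n hn => ?_⟩
  have hreal : ((recCoeff α a b s₁ s₂ Q n).re : ℂ) = recCoeff α a b s₁ s₂ Q n :=
    Complex.conj_eq_iff_re.1 (conj_recCoeff hα.le hs₁conj (hQn n).2.2 (hQn (n - 2)).2.2)
  refine ⟨(recCoeff α a b s₁ s₂ Q n).re, ?_, ?_, ?_⟩ <;> rw [hreal]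
  · rw [eq_X_mul_sub_recCoeff hs₁sym hs₁int hfi hQ hden hn (fun j _ => (hQn j).1)
      (fun j _ => (hQn j).2.1)]
    ring
  · rintro m rfl
    rw [recCoeff, if_pos (by omega), show 2 * m / 2 = m by omega]
  · rintro m rfl
    rw [recCoeff, if_neg (by omega), show (2 * m + 1) / 2 = m by omega]

/-- the monic polynomials `Q_n` satisfy the three-term recurrence of
order three `z Q_n = Q_{n+1} + a_n Q_{n-2}` for `n ≥ 2`, with `Q_j = X^j` for
`j = 0,1,2`, where the coefficients `a_n` are real and given by
`a_{2m} = (∫₀^α t^m Q_{2m} s₁)/(∫₀^α t^{m-1} Q_{2m-2} s₁)` and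
`a_{2m+1} = (∫₀^α t^m Q_{2m+1} f s₁)/(∫₀^α t^{m-1} Q_{2m-1} f s₁)`. -/
theorem statement5 (α a b : ℝ) (hα : 0 < α) (ha : 0 < a) (hab : a < b)
    (s₁ : ℂ → ℂ) (s₂ : ℝ → ℝ)
    (hs₁sym : ∀ z : ℂ, s₁ (ω * z) = ω ^ 2 * s₁ z)
    (hs₁real : ∀ t : ℝ, t ∈ Set.Ioo 0 α → ∃ r : ℝ, 0 ≤ r ∧ s₁ (t : ℂ) = (r : ℂ))
    (hs₁int : IntervalIntegrable (fun t : ℝ => s₁ (t : ℂ)) volume 0 α)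
    (hs₁ne : ∫ t in (0:ℝ)..α, s₁ (t : ℂ) ≠ 0)
    (hs₂pos : ∀ t ∈ Set.Icc (-b) (-a), 0 ≤ s₂ t)
    (hs₂int : IntervalIntegrable s₂ volume (-b) (-a))
    (hs₂ne : ∫ t in (-b)..(-a), s₂ t ≠ 0)
    (Q : ℕ → Polynomial ℂ) (hQ : ∀ m, IsMOP α a b s₁ s₂ (Q m) m)
    (hden : ∀ m : ℕ, 1 ≤ m →
      (∫ t in (0:ℝ)..α, (t : ℂ) ^ (m - 1) * (Q (2 * m - 2)).eval (t : ℂ) * s₁ (t : ℂ)) ≠ 0 ∧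
      (∫ t in (0:ℝ)..α, (t : ℂ) ^ (m - 1) * (Q (2 * m - 1)).eval (t : ℂ) *
        fTrans a b s₂ (t : ℂ) * s₁ (t : ℂ)) ≠ 0) :
    (∀ j : ℕ, j ≤ 2 → Q j = Polynomial.X ^ j) ∧
    (∀ n : ℕ, 2 ≤ n → ∃ an : ℝ,
      Polynomial.X * Q n = Q (n + 1) + Polynomial.C (an : ℂ) * Q (n - 2) ∧
      (∀ m : ℕ, n = 2 * m →
        (an : ℂ) = (∫ t in (0:ℝ)..α, (t : ℂ) ^ m * (Q n).eval (t : ℂ) * s₁ (t : ℂ)) /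
          (∫ t in (0:ℝ)..α, (t : ℂ) ^ (m - 1) * (Q (n - 2)).eval (t : ℂ) * s₁ (t : ℂ))) ∧
      (∀ m : ℕ, n = 2 * m + 1 →
        (an : ℂ) = (∫ t in (0:ℝ)..α, (t : ℂ) ^ m * (Q n).eval (t : ℂ) *
            fTrans a b s₂ (t : ℂ) * s₁ (t : ℂ)) /
          (∫ t in (0:ℝ)..α, (t : ℂ) ^ (m - 1) * (Q (n - 2)).eval (t : ℂ) *
            fTrans a b s₂ (t : ℂ) * s₁ (t : ℂ)))) :=
  statement5_general α a b hα ha hab s₁ s₂ hs₁sym hs₁real hs₁int hs₂int Q hQ hden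
end
end

section
/- Define Ψ_n(z) = ∫_{S₀} Q_n(t) s₁(t)/(t−z) dt for z ∉ S₀. Then Ψ_n satisfies the symmetry Ψ_n(e^{2πi/3}z) = e^{−2πi(1+2n)/3} Ψ_n(z) for all z ∈ ℂ∖S₀. -/
open Complex Finset intervalIntegral Polynomial Set

noncomputable section

/-- The star `S₀ = ⋃_{k=0}^{2} ωᵏ [0,α]` in the complex plane. -/
def starSet (α : ℝ) : Set ℂ :=
  {z : ℂ | ∃ k : Fin 3, ∃ t ∈ Set.Icc (0:ℝ) α, z = ω ^ (k : ℕ) * (t : ℂ)}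

/-- The function of second type `Ψ(w) = ∫_{S₀} Q(t) s₁(t)/(t-w) dt`, the integral over
the star being the sum of the three ray integrals. -/
def Psi (α : ℝ) (s₁ : ℂ → ℂ) (Q : Polynomial ℂ) (w : ℂ) : ℂ :=
  ∑ k ∈ Finset.range 3,
    ∫ t in (0:ℝ)..α, Q.eval (ω ^ k * (t : ℂ)) * s₁ (ω ^ k * (t : ℂ)) /
      (ω ^ k * (t : ℂ) - w) * ω ^ k

/-- `Ψ_n(e^{2πi/3} z) = e^{-2πi(1+2n)/3} Ψ_n(z)` for all `z ∉ S₀`. -/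
theorem statement7 (α : ℝ) (hα : 0 < α) (s₁ : ℂ → ℂ)
    (hs₁sym : ∀ z : ℂ, s₁ (ω * z) = ω ^ 2 * s₁ z)
    (Q : Polynomial ℂ) (n : ℕ)
    (hQ : ∀ z : ℂ, Q.eval (ω * z) = ω ^ n * Q.eval z)
    (z : ℂ) (hz : z ∉ starSet α) :
    Psi α s₁ Q (ω * z) = ω ^ (-(1 + 2 * (n : ℤ))) * Psi α s₁ Q z := by
  have hω3 : ω ^ 3 = 1 := by
    rw [ω, ← Complex.exp_nat_mul]
    have h : ((3:ℕ) : ℂ) * (2 * Real.pi * Complex.I / 3) = 2 * Real.pi * Complex.I := by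
      push_cast; ring
    rw [h, Complex.exp_two_pi_mul_I]
  have hω0 : ω ≠ 0 := Complex.exp_ne_zero _
  have key : ∀ (k k' : ℕ), ω ^ k = ω * ω ^ k' → k' < 3 → ∀ t ∈ Set.uIcc (0:ℝ) α,
      Q.eval (ω ^ k * (t:ℂ)) * s₁ (ω ^ k * (t:ℂ)) / (ω ^ k * (t:ℂ) - ω * z) * ω ^ k
      = ω ^ (n + 2) *
        (Q.eval (ω ^ k' * (t:ℂ)) * s₁ (ω ^ k' * (t:ℂ)) / (ω ^ k' * (t:ℂ) - z) * ω ^ k') := by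
    intro k k' hkk' hk' t ht
    rw [Set.uIcc_of_le hα.le] at ht
    have hne : ω ^ k' * (t:ℂ) - z ≠ 0 := by
      intro h
      exact hz ⟨⟨k', hk'⟩, t, ht, (sub_eq_zero.mp h).symm⟩
    have hu : ω ^ k * (t:ℂ) = ω * (ω ^ k' * (t:ℂ)) := by rw [hkk']; ring
    rw [hu, hQ, hs₁sym, hkk']
    have hωz : ω * (ω ^ k' * (t:ℂ)) - ω * z = ω * (ω ^ k' * (t:ℂ) - z) := by ring
    rw [hωz]
    field_simp
    ring
  have e0 : (∫ t in (0:ℝ)..α, Q.eval (ω ^ 0 * (t:ℂ)) * s₁ (ω ^ 0 * (t:ℂ)) /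
        (ω ^ 0 * (t:ℂ) - ω * z) * ω ^ 0)
      = ω ^ (n + 2) * ∫ t in (0:ℝ)..α, Q.eval (ω ^ 2 * (t:ℂ)) * s₁ (ω ^ 2 * (t:ℂ)) /
        (ω ^ 2 * (t:ℂ) - z) * ω ^ 2 := by
    rw [← intervalIntegral.integral_const_mul]
    exact intervalIntegral.integral_congr
      (key 0 2 (by rw [pow_zero]; linear_combination -hω3) (by norm_num))
  have e1 : (∫ t in (0:ℝ)..α, Q.eval (ω ^ 1 * (t:ℂ)) * s₁ (ω ^ 1 * (t:ℂ)) /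
        (ω ^ 1 * (t:ℂ) - ω * z) * ω ^ 1)
      = ω ^ (n + 2) * ∫ t in (0:ℝ)..α, Q.eval (ω ^ 0 * (t:ℂ)) * s₁ (ω ^ 0 * (t:ℂ)) /
        (ω ^ 0 * (t:ℂ) - z) * ω ^ 0 := by
    rw [← intervalIntegral.integral_const_mul]
    exact intervalIntegral.integral_congr
      (key 1 0 (by rw [pow_one, pow_zero, mul_one]) (by norm_num))
  have e2 : (∫ t in (0:ℝ)..α, Q.eval (ω ^ 2 * (t:ℂ)) * s₁ (ω ^ 2 * (t:ℂ)) /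
        (ω ^ 2 * (t:ℂ) - ω * z) * ω ^ 2)
      = ω ^ (n + 2) * ∫ t in (0:ℝ)..α, Q.eval (ω ^ 1 * (t:ℂ)) * s₁ (ω ^ 1 * (t:ℂ)) /
        (ω ^ 1 * (t:ℂ) - z) * ω ^ 1 := by
    rw [← intervalIntegral.integral_const_mul]
    exact intervalIntegral.integral_congr
      (key 2 1 (by ring) (by norm_num))
  have hpow : ω ^ (-(1 + 2 * (n : ℤ))) = ω ^ (n + 2) := by
    have h1 : ω ^ (n + 2) * ω ^ (1 + 2 * n) = 1 := by
      rw [← pow_add]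
      have h : n + 2 + (1 + 2 * n) = 3 * (n + 1) := by ring
      rw [h, pow_mul, hω3, one_pow]
    have h2 : (-(1 + 2 * (n : ℤ))) = -((1 + 2 * n : ℕ) : ℤ) := by push_cast; ring
    rw [h2, zpow_neg, zpow_natCast]
    exact inv_eq_of_mul_eq_one_left h1
  simp only [Psi, Finset.sum_range_succ, Finset.sum_range_zero, zero_add]
  rw [e0, e1, e2, hpow]
  ring

end
end

section
/- Let x₁^{(n)} < ... < x_k^{(n)} denote the zeros of Q_n in (0,α) (k = ⌊n/3⌋ appropriately). Writing Q_{3k}(z) = b₀^{(3k)} + ... + z^{3k}, Q_{3k+1}(z) = b₁^{(3k+1)} z + ... + z^{3k+1}, Q_{3k-2}(z) = b₁^{(3k-2)} z + ... + z^{3k-2}, the recurrence z Q_{3k} = Q_{3k+1} + a_{3k} Q_{3k-2} implies b₀^{(3k)} − b₁^{(3k+1)} = a_{3k} b₁^{(3k-2)}. Combined with a_{3k} > 0 and Vieta's formulas (b₀^{(3k)} = (−1)^{3k}(x₁^{(3k)}···x_k^{(3k)})³, etc.), this yields (x₁^{(3k)}···x_k^{(3k)})³ < (x₁^{(3k+1)}···x_k^{(3k+1)})³,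 and hence the shifted interlacing x₁^{(3k)} < x₁^{(3k+1)} < x₂^{(3k)} < ... < x_k^{(3k)} < x_k^{(3k+1)}. -/
open Complex Polynomial Set Finset

noncomputable section

lemma interlace_aux {k : ℕ} (x y : Fin k → ℝ) (hx : StrictMono x) (hy : StrictMono y)
    (hb1 : ∀ (i : Fin k) (h : (i : ℕ) + 1 < k),
      ∃ j : Fin k, x i < y j ∧ y j < x ⟨(i : ℕ) + 1, h⟩)
    (hk : 0 < k) (h0 : x ⟨0, hk⟩ < y ⟨0, hk⟩)
    (hb2 : ∀ (i : Fin k) (h : (i : ℕ) + 1 < k),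
      ∃ j : Fin k, y i < x j ∧ x j < y ⟨(i : ℕ) + 1, h⟩) :
    (∀ i, x i < y i) ∧ ∀ (i : Fin k) (h : (i : ℕ) + 1 < k), y i < x ⟨(i : ℕ) + 1, h⟩ := by
  have key : ∀ n (h : n < k), x ⟨n, h⟩ < y ⟨n, h⟩ ∧
      ∀ (hp : n + 1 < k), y ⟨n, h⟩ < x ⟨n + 1, hp⟩ := by
    intro n
    induction n with
    | zero =>
      intro h
      refine ⟨h0, fun hp => ?_⟩
      obtain ⟨j, hj1, hj2⟩ := hb1 ⟨0, h⟩ hp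
      exact lt_of_le_of_lt (hy.monotone (show (⟨0, h⟩ : Fin k) ≤ j by
        simp [Fin.le_def])) hj2
    | succ n ih =>
      intro h
      have hn : n < k := Nat.lt_of_succ_lt h
      obtain ⟨ihx, ihy⟩ := ih hn
      have hxy : x ⟨n + 1, h⟩ < y ⟨n + 1, h⟩ := by
        obtain ⟨j, hj1, hj2⟩ := hb2 ⟨n, hn⟩ h
        have hlt : (⟨n, hn⟩ : Fin k) < j := hx.lt_iff_lt.mp (ihx.trans hj1)
        have hle : (⟨n + 1, h⟩ : Fin k) ≤ j := by
          simp only [Fin.le_def, Fin.lt_def] at hlt ⊢; omega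
        exact lt_of_le_of_lt (hx.monotone hle) hj2
      refine ⟨hxy, fun hp => ?_⟩
      obtain ⟨j, hj1, hj2⟩ := hb1 ⟨n + 1, h⟩ hp
      have hle : (⟨n + 1, h⟩ : Fin k) ≤ j := by
        by_contra hcon
        push_neg at hcon
        have hj : j ≤ (⟨n, hn⟩ : Fin k) := by
          simp only [Fin.le_def, Fin.lt_def] at hcon ⊢; omega
        have h1 : y j ≤ y ⟨n, hn⟩ := hy.monotone hj
        have h2 := ihy h
        linarith
      exact lt_of_le_of_lt (hy.monotone hle) hj2
  constructor
  · intro i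
    have := (key i i.isLt).1
    simpa using this
  · intro i hI
    have := (key i i.isLt).2 hI
    simpa using this

lemma prod_neg_cube {m : ℕ} (c : Fin m → ℝ) :
    (∏ i : Fin m, (-(c i : ℂ) ^ 3)) = (-1) ^ m * ((∏ i : Fin m, c i ^ 3 : ℝ) : ℂ) := by
  push_cast
  calc ∏ i : Fin m, (-(c i : ℂ) ^ 3) = ∏ i : Fin m, ((-1) * (c i : ℂ) ^ 3) := by
        refine Finset.prod_congr rfl fun i _ => by ring
    _ = (-1) ^ m * ∏ i : Fin m, (c i : ℂ) ^ 3 := by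
        rw [Finset.prod_mul_distrib, Finset.prod_const, Finset.card_univ, Fintype.card_fin]

/-- Let `x₁ < ... < x_k` be the zeros of `Q_{3k}` in `(0,α)` and
`y₁ < ... < y_k` those of `Q_{3k+1}`, with `Q_{3k} = ∏ (X³ - xᵢ³)`,
`Q_{3k+1} = X ∏ (X³ - yᵢ³)`, `Q_{3k-2} = X ∏ (X³ - wᵢ³)` (`wᵢ > 0`).  The
recurrence `z Q_{3k} = Q_{3k+1} + a Q_{3k-2}` implies the coefficient identity
`b₀^{(3k)} - b₁^{(3k+1)} = a·b₁^{(3k-2)}`, and together with `a > 0`, Vieta's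
formulas and the weak interlacing of the zeros, one gets
`(x₁···x_k)³ < (y₁···y_k)³` and the shifted interlacing
`x₁ < y₁ < x₂ < ... < x_k < y_k`. -/
theorem statement11 (α : ℝ) (hα : 0 < α) (k : ℕ) (hk : 1 ≤ k)
    (x y : Fin k → ℝ) (w : Fin (k - 1) → ℝ)
    (hxmono : StrictMono x) (hymono : StrictMono y)
    (hx : ∀ i, x i ∈ Set.Ioo 0 α) (hy : ∀ i, y i ∈ Set.Ioo 0 α)
    (hw : ∀ i, 0 < w i)
    (Q3k Q3k1 Q3km2 : Polynomial ℂ)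
    (hQ3k : Q3k = ∏ i : Fin k, (Polynomial.X ^ 3 - Polynomial.C ((x i : ℂ) ^ 3)))
    (hQ3k1 : Q3k1 = Polynomial.X *
      ∏ i : Fin k, (Polynomial.X ^ 3 - Polynomial.C ((y i : ℂ) ^ 3)))
    (hQ3km2 : Q3km2 = Polynomial.X *
      ∏ i : Fin (k - 1), (Polynomial.X ^ 3 - Polynomial.C ((w i : ℂ) ^ 3)))
    (a : ℝ) (ha : 0 < a)
    (hrec : Polynomial.X * Q3k = Q3k1 + Polynomial.C ((a : ℝ) : ℂ) * Q3km2)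
    -- weak interlacing: the zeros are distinct and between two consecutive
    -- zeros of one polynomial lies a zero of the other
    (hsep : ∀ i j, x i ≠ y j)
    (hbetween₁ : ∀ (i : Fin k) (h : (i : ℕ) + 1 < k),
      ∃ j : Fin k, x i < y j ∧ y j < x ⟨(i : ℕ) + 1, h⟩)
    (hbetween₂ : ∀ (i : Fin k) (h : (i : ℕ) + 1 < k),
      ∃ j : Fin k, y i < x j ∧ x j < y ⟨(i : ℕ) + 1, h⟩) :
    Q3k.coeff 0 - Q3k1.coeff 1 = ((a : ℝ) : ℂ) * Q3km2.coeff 1 ∧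
    (∏ i : Fin k, x i) ^ 3 < (∏ i : Fin k, y i) ^ 3 ∧
    (∀ i : Fin k, x i < y i) ∧
    (∀ (i : Fin k) (h : (i : ℕ) + 1 < k), y i < x ⟨(i : ℕ) + 1, h⟩) := by
  have h0k : 0 < k := hk
  -- coefficient identity
  have hid : Q3k.coeff 0 - Q3k1.coeff 1 = ((a : ℝ) : ℂ) * Q3km2.coeff 1 := by
    have h1 := congrArg (fun p => Polynomial.coeff p 1) hrec
    simp only [Polynomial.coeff_add, Polynomial.coeff_C_mul] at h1
    rw [show (1 : ℕ) = 0 + 1 from rfl, Polynomial.coeff_X_mul] at h1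
    linear_combination h1
  -- coefficient values
  have hc0 : Q3k.coeff 0 = ∏ i : Fin k, (-(x i : ℂ) ^ 3) := by
    rw [hQ3k, Polynomial.coeff_zero_eq_eval_zero, Polynomial.eval_prod]
    simp
  have hc1 : Q3k1.coeff 1 = ∏ i : Fin k, (-(y i : ℂ) ^ 3) := by
    rw [hQ3k1, show (1 : ℕ) = 0 + 1 from rfl, Polynomial.coeff_X_mul,
      Polynomial.coeff_zero_eq_eval_zero, Polynomial.eval_prod]
    simp
  have hc2 : Q3km2.coeff 1 = ∏ i : Fin (k - 1), (-(w i : ℂ) ^ 3) := by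
    rw [hQ3km2]
    exact (Polynomial.coeff_X_mul _ 0).trans (by
      rw [Polynomial.coeff_zero_eq_eval_zero, Polynomial.eval_prod]; simp)
  set X : ℝ := ∏ i : Fin k, x i ^ 3 with hX
  set Y : ℝ := ∏ i : Fin k, y i ^ 3 with hY
  set W : ℝ := ∏ i : Fin (k - 1), w i ^ 3 with hW
  have hidC : ((-1 : ℂ)) ^ k * (X : ℂ) - (-1) ^ k * (Y : ℂ)
      = (a : ℂ) * ((-1) ^ (k - 1) * (W : ℂ)) := by
    have := hid
    rw [hc0, hc1, hc2, prod_neg_cube, prod_neg_cube, prod_neg_cube] at this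
    exact this
  -- simplify the signs
  have hkk : k = (k - 1) + 1 := (Nat.succ_pred_eq_of_pos h0k).symm
  have hRC : (X : ℂ) - (Y : ℂ) = -((a : ℂ) * (W : ℂ)) := by
    have hsq : ((-1 : ℂ)) ^ (k - 1) * (-1) ^ (k - 1) = 1 := by
      rw [← mul_pow]; norm_num
    rw [hkk, pow_succ] at hidC
    simp only [Nat.add_sub_cancel] at hidC
    linear_combination (-1 : ℂ) ^ (k - 1) * (-1) * hidC
      + ((Y : ℂ) - (X : ℂ) - (a : ℂ) * (W : ℂ)) * hsq
  have hR : X - Y = -(a * W) := by exact_mod_cast hRC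
  have hWpos : 0 < W := Finset.prod_pos fun i _ => pow_pos (hw i) 3
  have hXY : X < Y := by nlinarith
  have hprodlt : (∏ i : Fin k, x i) ^ 3 < (∏ i : Fin k, y i) ^ 3 := by
    rw [← Finset.prod_pow, ← Finset.prod_pow]
    exact hXY
  -- interlacing
  have i0 : Fin k := ⟨0, h0k⟩
  have hxpos : ∀ i, 0 < x i := fun i => (hx i).1
  have hypos : ∀ i, 0 < y i := fun i => (hy i).1
  rcases lt_or_gt_of_ne (hsep ⟨0, h0k⟩ ⟨0, h0k⟩) with h0 | h0
  · obtain ⟨h1, h2⟩ := interlace_aux x y hxmono hymono hbetween₁ h0k h0 hbetween₂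
    exact ⟨hid, hprodlt, h1, h2⟩
  · exfalso
    obtain ⟨h1, _⟩ := interlace_aux y x hymono hxmono hbetween₂ h0k h0
      (fun i h => (hbetween₁ i h).imp (fun j hj => hj))
    have : (∏ i : Fin k, y i) < ∏ i : Fin k, x i :=
      Finset.prod_lt_prod_of_nonempty (fun i _ => hypos i) (fun i _ => h1 i)
        ⟨⟨0, h0k⟩, Finset.mem_univ _⟩
    have h3 : (∏ i : Fin k, y i) ^ 3 < (∏ i : Fin k, x i) ^ 3 := by
      have hyP : 0 ≤ ∏ i : Fin k, y i := Finset.prod_nonneg fun i _ => (hypos i).le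
      exact pow_lt_pow_left₀ this hyP (by norm_num)
    linarith
  
end
end

section
/- Let F̃₁^{(i)}, i = 0,…,5, be the ratio-asymptotic limit functions of P_{6k+i+1}/P_{6k+i}, holomorphic and nonvanishing in ℂ∖[0,α³], with Laurent expansions F̃₁^{(i)}(z) = 1 + O(1/z) for i ∈ {0,1,3,4} and F̃₁^{(i)}(z) = z + O(1) for i ∈ {2,5}. Assume the six limit relations a^{(i)} = F̃₁^{(i-2)} F̃₁^{(i-1)} (1 − F̃₁^{(i)}) for i ∈ {0,1,3,4} and a^{(i)} = F̃₁^{(i-2)} F̃₁^{(i-1)} (z − F̃₁^{(i)}) for i ∈ {2,5} (indices mod 6), where a^{(i)} are constants. Given additionally F̃₁^{(2)}(z) = z F̃₁^{(0)}(z), F̃₁^{(5)}(z) = z F̃₁^{(3)}(z), and a^{(0)} = a^{(2)}, a^{(3)} = a^{(5)}, prove that F̃₁^{(1)} F̃₁^{(2)} = F̃₁^{(4)} F̃₁^{(5)}, F̃₁^{(0)} F̃₁^{(1)} = F̃₁^{(3)} F̃₁^{(4)}, and F̃₁^{(2)} F̃₁^{(3)} = F̃₁^{(5)} F̃₁^{(0)}.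 -/
open Complex Filter Bornology Set

noncomputable section

/-- The plane slit along the segment `[0,α³] ⊂ ℝ`. -/
def slitPlane₁ (α : ℝ) : Set ℂ :=
  {z : ℂ | ¬(z.im = 0 ∧ 0 ≤ z.re ∧ z.re ≤ α ^ 3)}

/-- Let `F̃₁⁽ⁱ⁾`, `i = 0,…,5`, be holomorphic nonvanishing functions
on `ℂ∖[0,α³]` with `F̃₁⁽ⁱ⁾ = 1 + O(1/z)` for `i ∈ {0,1,3,4}` and
`F̃₁⁽ⁱ⁾ = z + O(1)` for `i ∈ {2,5}`, satisfying
`a⁽ⁱ⁾ = F̃₁⁽ⁱ⁻²⁾ F̃₁⁽ⁱ⁻¹⁾ (1 - F̃₁⁽ⁱ⁾)` for `i ∈ {0,1,3,4}` and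
`a⁽ⁱ⁾ = F̃₁⁽ⁱ⁻²⁾ F̃₁⁽ⁱ⁻¹⁾ (z - F̃₁⁽ⁱ⁾)` for `i ∈ {2,5}` (indices mod 6).  Given
additionally `F̃₁⁽²⁾ = z F̃₁⁽⁰⁾`, `F̃₁⁽⁵⁾ = z F̃₁⁽³⁾`, `a⁽⁰⁾ = a⁽²⁾`,
`a⁽³⁾ = a⁽⁵⁾`, the three product relations hold. -/
theorem statement12 (α : ℝ) (hα : 0 < α)
    (F : Fin 6 → ℂ → ℂ) (A : Fin 6 → ℝ)
    (hhol : ∀ i, DifferentiableOn ℂ (F i) (slitPlane₁ α))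
    (hnv : ∀ i, ∀ z ∈ slitPlane₁ α, F i z ≠ 0)
    (hApos : ∀ i, 0 < A i)
    (hrel1 : ∀ i ∈ ({0, 1, 3, 4} : Finset (Fin 6)), ∀ z ∈ slitPlane₁ α,
      (A i : ℂ) = F (i - 2) z * F (i - 1) z * (1 - F i z))
    (hrel2 : ∀ i ∈ ({2, 5} : Finset (Fin 6)), ∀ z ∈ slitPlane₁ α,
      (A i : ℂ) = F (i - 2) z * F (i - 1) z * (z - F i z))
    (hlaurent1 : ∀ i ∈ ({0, 1, 3, 4} : Finset (Fin 6)),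
      Tendsto (F i) (cobounded ℂ) (nhds 1))
    (hlaurent2 : ∀ i ∈ ({2, 5} : Finset (Fin 6)),
      ∃ Cb : ℝ, ∀ᶠ z in cobounded ℂ, ‖F i z - z‖ ≤ Cb)
    (hF2 : ∀ z ∈ slitPlane₁ α, F 2 z = z * F 0 z)
    (hF5 : ∀ z ∈ slitPlane₁ α, F 5 z = z * F 3 z)
    (hA02 : A 0 = A 2) (hA35 : A 3 = A 5) :
    ∀ z ∈ slitPlane₁ α,
      F 0 z * F 1 z = F 3 z * F 4 z ∧
      F 1 z * F 2 z = F 4 z * F 5 z ∧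
      F 2 z * F 3 z = F 5 z * F 0 z := by
  intro z hz
  have hz0 : z ≠ 0 := by
    rintro rfl
    exact hz ⟨rfl, le_refl 0, le_of_lt (pow_pos hα 3)⟩
  have h0 := hrel1 0 (by decide) z hz
  have h2 := hrel2 2 (by decide) z hz
  have e1 : (0 - 2 : Fin 6) = 4 := by decide
  have e2 : (0 - 1 : Fin 6) = 5 := by decide
  have e3 : (2 - 2 : Fin 6) = 0 := by decide
  have e4 : (2 - 1 : Fin 6) = 1 := by decide
  rw [e1, e2, hF5 z hz] at h0
  rw [e3, e4, hF2 z hz] at h2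
  have hA02c : (A 0 : ℂ) = (A 2 : ℂ) := by exact_mod_cast hA02
  have hne : (1 : ℂ) - F 0 z ≠ 0 := by
    intro h
    rw [h, mul_zero] at h0
    exact (hApos 0).ne' (by exact_mod_cast h0)
  have key : F 0 z * F 1 z = F 3 z * F 4 z := by
    apply mul_left_cancel₀ (mul_ne_zero hz0 hne)
    linear_combination h0 - h2 - hA02c
  refine ⟨key, ?_, ?_⟩
  · rw [hF2 z hz, hF5 z hz]; linear_combination z * key
  · rw [hF2 z hz, hF5 z hz]; ring

end
end

section
/- Under the same functional relations, the quotient identities (1 − F̃₁^{(3)})/(1 − F̃₁^{(0)}) = a^{(3)}/a^{(0)}, (1 − F̃₁^{(4)})/(1 − F̃₁^{(1)}) = a^{(4)}/a^{(1)}, and (z − F̃₁^{(5)}(z))/(z − F̃₁^{(2)}(z)) = a^{(5)}/a^{(2)} hold, and consequently a^{(0)} + a^{(1)} = a^{(3)} + a^{(4)}. -/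
/-! In each pair of functional relations compared, the product relations make the prefactors
`F⁽ⁱ⁻²⁾ F⁽ⁱ⁻¹⁾` coincide, so the quotient identities follow by cancelling them. For the sum,
the `1/z`-coefficient at infinity of `F⁽⁰⁾F⁽¹⁾ = F⁽³⁾F⁽⁴⁾` is `-(a⁽⁰⁾ + a⁽¹⁾) = -(a⁽³⁾ + a⁽⁴⁾)`. -/

open Complex Filter Bornology Set

noncomputable section

lemma slitPlane₁_mem_cobounded (α : ℝ) : slitPlane₁ α ∈ cobounded ℂ := by
  have hseg : IsBounded {z : ℂ | z.im = 0 ∧ 0 ≤ z.re ∧ z.re ≤ α ^ 3} :=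
    ((Metric.isBounded_Icc 0 (α ^ 3)).reProdIm (isBounded_singleton (x := (0 : ℝ)))).subset
      fun z ⟨him, hre⟩ => ⟨hre, him⟩
  exact hseg.compl

lemma div_eq_div_of_eq_mul_of_eq_mul {K : Type*} [Field K] {a b p q u v : K}
    (ha : a = p * u) (hb : b = q * v) (hpq : p = q) (ha0 : a ≠ 0) : v / u = b / a := by
  have hp : p ≠ 0 := left_ne_zero_of_mul (ha ▸ ha0)
  rw [ha, hb, ← hpq, mul_div_mul_left _ _ hp]

section Cobounded

variable {𝕜 : Type*} [NormedField 𝕜] {f g : 𝕜 → 𝕜} {a b : 𝕜}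

lemma tendsto_one_of_tendsto_mul_sub_one
    (hf : Tendsto (fun z => z * (f z - 1)) (cobounded 𝕜) (nhds a)) :
    Tendsto f (cobounded 𝕜) (nhds 1) := by
  have h : Tendsto (fun z => z * (f z - 1) * z⁻¹ + 1) (cobounded 𝕜) (nhds (a * 0 + 1)) :=
    (hf.mul tendsto_inv₀_cobounded).add tendsto_const_nhds
  rw [mul_zero, zero_add] at h
  refine h.congr' ?_
  filter_upwards [eventually_ne_cobounded (0 : 𝕜)] with z hz
  field_simp
  ring

lemma tendsto_mul_mul_sub_one
    (hf : Tendsto (fun z => z * (f z - 1)) (cobounded 𝕜) (nhds a))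
    (hg : Tendsto (fun z => z * (g z - 1)) (cobounded 𝕜) (nhds b)) :
    Tendsto (fun z => z * (f z * g z - 1)) (cobounded 𝕜) (nhds (a + b)) := by
  have h := (hf.mul (tendsto_one_of_tendsto_mul_sub_one hg)).add hg
  rw [mul_one] at h
  exact h.congr fun z => by ring

end Cobounded

theorem statement13_general (α : ℝ)
    (F : Fin 6 → ℂ → ℂ) (A : Fin 6 → ℝ)
    (hApos : ∀ i, 0 < A i)
    (hrel1 : ∀ i ∈ ({0, 1, 3, 4} : Finset (Fin 6)), ∀ z ∈ slitPlane₁ α,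
      (A i : ℂ) = F (i - 2) z * F (i - 1) z * (1 - F i z))
    (hrel2 : ∀ i ∈ ({2, 5} : Finset (Fin 6)), ∀ z ∈ slitPlane₁ α,
      (A i : ℂ) = F (i - 2) z * F (i - 1) z * (z - F i z))
    (hlaurent1 : ∀ i ∈ ({0, 1, 3, 4} : Finset (Fin 6)),
      Tendsto (fun z : ℂ => z * (F i z - 1)) (cobounded ℂ) (nhds (-(A i : ℂ))))
    (hprod1 : ∀ z ∈ slitPlane₁ α, F 0 z * F 1 z = F 3 z * F 4 z)
    (hprod2 : ∀ z ∈ slitPlane₁ α, F 1 z * F 2 z = F 4 z * F 5 z)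
    (hprod3 : ∀ z ∈ slitPlane₁ α, F 2 z * F 3 z = F 5 z * F 0 z) :
    (∀ z ∈ slitPlane₁ α,
      (1 - F 3 z) / (1 - F 0 z) = (A 3 : ℂ) / (A 0 : ℂ) ∧
      (1 - F 4 z) / (1 - F 1 z) = (A 4 : ℂ) / (A 1 : ℂ) ∧
      (z - F 5 z) / (z - F 2 z) = (A 5 : ℂ) / (A 2 : ℂ)) ∧
    A 0 + A 1 = A 3 + A 4 := by
  have hA (i : Fin 6) : (A i : ℂ) ≠ 0 := ofReal_ne_zero.mpr (hApos i).ne'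
  refine ⟨fun z hz => ⟨?_, ?_, ?_⟩, ?_⟩
  · exact div_eq_div_of_eq_mul_of_eq_mul (hrel1 0 (by decide) z hz) (hrel1 3 (by decide) z hz)
      (hprod2 z hz).symm (hA 0)
  · exact div_eq_div_of_eq_mul_of_eq_mul (hrel1 1 (by decide) z hz) (hrel1 4 (by decide) z hz)
      (hprod3 z hz).symm (hA 1)
  · exact div_eq_div_of_eq_mul_of_eq_mul (hrel2 2 (by decide) z hz) (hrel2 5 (by decide) z hz)
      (hprod1 z hz) (hA 2)
  · have h01 := tendsto_mul_mul_sub_one (hlaurent1 0 (by decide)) (hlaurent1 1 (by decide))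
    have h34 := tendsto_mul_mul_sub_one (hlaurent1 3 (by decide)) (hlaurent1 4 (by decide))
    have hlim : -(A 0 : ℂ) + -A 1 = -A 3 + -A 4 := by
      refine tendsto_nhds_unique (h01.congr' ?_) h34
      filter_upwards [slitPlane₁_mem_cobounded α] with z hz
      rw [hprod1 z hz]
    have hsum : ((A 0 + A 1 : ℝ) : ℂ) = ((A 3 + A 4 : ℝ) : ℂ) := by
      push_cast
      linear_combination -hlim
    exact_mod_cast hsum

/-- under the same functional relations (together with the product
relations `F̃₁⁽⁰⁾F̃₁⁽¹⁾ = F̃₁⁽³⁾F̃₁⁽⁴⁾` etc. and the Laurent expansions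
`F̃₁⁽ⁱ⁾ = 1 - a⁽ⁱ⁾/z + o(1/z)` for `i ∈ {0,1,3,4}`,
`F̃₁⁽ⁱ⁾ = z - a⁽ⁱ⁾ + o(1)` for `i ∈ {2,5}`), the quotient identities
`(1 - F̃₁⁽³⁾)/(1 - F̃₁⁽⁰⁾) = a⁽³⁾/a⁽⁰⁾`, `(1 - F̃₁⁽⁴⁾)/(1 - F̃₁⁽¹⁾) = a⁽⁴⁾/a⁽¹⁾`,
`(z - F̃₁⁽⁵⁾)/(z - F̃₁⁽²⁾) = a⁽⁵⁾/a⁽²⁾` hold, and `a⁽⁰⁾ + a⁽¹⁾ = a⁽³⁾ + a⁽⁴⁾`. -/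
theorem statement13 (α : ℝ) (hα : 0 < α)
    (F : Fin 6 → ℂ → ℂ) (A : Fin 6 → ℝ)
    (hhol : ∀ i, DifferentiableOn ℂ (F i) (slitPlane₁ α))
    (hnv : ∀ i, ∀ z ∈ slitPlane₁ α, F i z ≠ 0)
    (hApos : ∀ i, 0 < A i)
    (hrel1 : ∀ i ∈ ({0, 1, 3, 4} : Finset (Fin 6)), ∀ z ∈ slitPlane₁ α,
      (A i : ℂ) = F (i - 2) z * F (i - 1) z * (1 - F i z))
    (hrel2 : ∀ i ∈ ({2, 5} : Finset (Fin 6)), ∀ z ∈ slitPlane₁ α,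
      (A i : ℂ) = F (i - 2) z * F (i - 1) z * (z - F i z))
    (hlaurent1 : ∀ i ∈ ({0, 1, 3, 4} : Finset (Fin 6)),
      Tendsto (fun z : ℂ => z * (F i z - 1)) (cobounded ℂ) (nhds (-(A i : ℂ))))
    (hlaurent2 : ∀ i ∈ ({2, 5} : Finset (Fin 6)),
      Tendsto (fun z : ℂ => F i z - z) (cobounded ℂ) (nhds (-(A i : ℂ))))
    (hprod1 : ∀ z ∈ slitPlane₁ α, F 0 z * F 1 z = F 3 z * F 4 z)
    (hprod2 : ∀ z ∈ slitPlane₁ α, F 1 z * F 2 z = F 4 z * F 5 z)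
    (hprod3 : ∀ z ∈ slitPlane₁ α, F 2 z * F 3 z = F 5 z * F 0 z) :
    (∀ z ∈ slitPlane₁ α,
      (1 - F 3 z) / (1 - F 0 z) = (A 3 : ℂ) / (A 0 : ℂ) ∧
      (1 - F 4 z) / (1 - F 1 z) = (A 4 : ℂ) / (A 1 : ℂ) ∧
      (z - F 5 z) / (z - F 2 z) = (A 5 : ℂ) / (A 2 : ℂ)) ∧
    A 0 + A 1 = A 3 + A 4 :=
  statement13_general α F A hApos hrel1 hrel2 hlaurent1 hprod1 hprod2 hprod3

end
end

section
/- Suppose u₁ is a bounded harmonic function on ℂ̄∖Δ₁ and u₂ is a bounded harmonic function on ℂ̄∖Δ₂, where Δ₁, Δ₂ are disjoint compact real intervals, both regular for the Dirichlet problem, and suppose 2u₁(τ) − u₂(τ) = 0 for τ ∈ Δ₁ and −u₁(τ) + 2u₂(τ) = 0 for τ ∈ Δ₂. Then u₁ ≡ 0 and u₂ ≡ 0. -/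
/-!
By the maximum principle, a bounded continuous function harmonic off a compact set `K ≠ ∅`
satisfies `sup |u| = max_K |u|`; the only extra work is at `∞`, handled by comparing `u` with
`ε log |z - q|` on large annuli and letting `ε → 0`. Let `Nᵢ = max_{Δᵢ} |uᵢ|`, attained at
`xᵢ ∈ Δᵢ`. The boundary relations give `2 N₁ = |u₂ x₁| ≤ N₂` and `2 N₂ = |u₁ x₂| ≤ N₁`,
so `N₁ = N₂ = 0`.
-/

open Complex Set Metric Filter Topology

noncomputable section

/-- A real-valued function is harmonic on an open subset of `ℂ` iff it is locally
the real part of a holomorphic function. -/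
def HarmOn (u : ℂ → ℝ) (s : Set ℂ) : Prop :=
  ∀ z ∈ s, ∃ ε > 0, ∃ f : ℂ → ℂ,
    (∀ w ∈ Metric.ball z ε, DifferentiableAt ℂ f w) ∧
    (∀ w ∈ Metric.ball z ε, u w = (f w).re)

namespace HarmOn

variable {u v : ℂ → ℝ} {s t : Set ℂ}

theorem mono (hu : HarmOn u s) (hts : t ⊆ s) : HarmOn u t :=
  fun z hz => hu z (hts hz)

theorem neg (hu : HarmOn u s) : HarmOn (fun z => -u z) s := by
  intro z hz
  obtain ⟨ε, hε, f, hf, hfu⟩ := hu z hz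
  exact ⟨ε, hε, fun w => -f w, fun w hw => (hf w hw).neg, fun w hw => by simp [hfu w hw]⟩

theorem sub (hu : HarmOn u s) (hv : HarmOn v s) : HarmOn (fun z => u z - v z) s := by
  intro z hz
  obtain ⟨ε, hε, f, hf, hfu⟩ := hu z hz
  obtain ⟨δ, hδ, g, hg, hgv⟩ := hv z hz
  refine ⟨min ε δ, lt_min hε hδ, fun w => f w - g w, fun w hw => ?_, fun w hw => ?_⟩
  · exact (hf w (ball_subset_ball (min_le_left _ _) hw)).sub
      (hg w (ball_subset_ball (min_le_right _ _) hw))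
  · simp [hfu w (ball_subset_ball (min_le_left _ _) hw),
      hgv w (ball_subset_ball (min_le_right _ _) hw)]

theorem const_mul (hu : HarmOn u s) (c : ℝ) : HarmOn (fun z => c * u z) s := by
  intro z hz
  obtain ⟨ε, hε, f, hf, hfu⟩ := hu z hz
  exact ⟨ε, hε, fun w => c * f w, fun w hw => (hf w hw).const_mul _,
    fun w hw => by simp [hfu w hw]⟩

end HarmOn

theorem harmOn_log_dist (q : ℂ) : HarmOn (fun z => Real.log (dist z q)) {q}ᶜ := by
  intro z hz
  have hzq : z - q ≠ 0 := sub_ne_zero.2 hz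
  have hslit : ∀ w ∈ ball z ‖z - q‖, (w - q) / (z - q) ∈ slitPlane := fun w hw => by
    apply ball_one_subset_slitPlane
    rwa [mem_ball, dist_eq, div_sub_one hzq, sub_sub_sub_cancel_right, norm_div,
      div_lt_one (norm_pos_iff.2 hzq), ← dist_eq]
  refine ⟨‖z - q‖, norm_pos_iff.2 hzq,
    fun w => log ((w - q) / (z - q)) + (Real.log ‖z - q‖ : ℂ), fun w hw => ?_, fun w hw => ?_⟩
  · exact ((differentiableAt_log (hslit w hw)).comp w
      ((differentiableAt_id.sub_const q).div_const _)).add_const _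
  · have hwq : w - q ≠ 0 := by
      simpa [hzq] using slitPlane_ne_zero (hslit w hw)
    simp only [add_re, log_re, ofReal_re, norm_div, dist_eq]
    rw [Real.log_div (norm_ne_zero_iff.2 hwq) (norm_ne_zero_iff.2 hzq)]
    ring

namespace HarmOn

variable {u : ℂ → ℝ} {s U F K : Set ℂ} {q : ℂ} {r t : ℝ}

-- `‖exp ∘ f‖ = exp ∘ u` near `z`, so the maximum modulus principle applies to `exp ∘ f`.
theorem eventually_eq_of_isLocalMax (hu : HarmOn u s) {z : ℂ} (hz : z ∈ s)
    (hmax : IsLocalMax u z) : ∀ᶠ w in 𝓝 z, u w = u z := by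
  obtain ⟨ε, hε, f, hf, hfu⟩ := hu z hz
  have hball : ∀ᶠ w in 𝓝 z, w ∈ ball z ε := ball_mem_nhds z hε
  have hnorm : ∀ w ∈ ball z ε, ‖exp (f w)‖ = Real.exp (u w) := fun w hw => by
    rw [norm_exp, hfu w hw]
  have hconst : ∀ᶠ w in 𝓝 z, exp (f w) = exp (f z) := by
    refine eventually_eq_of_isLocalMax_norm (hball.mono fun w hw => (hf w hw).cexp) ?_
    filter_upwards [hmax, hball] with w hw hwz
    simpa only [Function.comp_apply, hnorm w hwz, hnorm z (mem_ball_self hε),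
      Real.exp_le_exp] using hw
  filter_upwards [hconst, hball] with w hw hwz
  apply Real.exp_injective
  rw [← hnorm w hwz, ← hnorm z (mem_ball_self hε), hw]

-- Otherwise `{z ∈ F | u z = u z₀}` lies in `U`, hence is open by the local strong maximum
-- principle, as well as closed and nonempty: it would be all of `ℂ`.
theorem exists_mem_diff_eq_of_isMaxOn (hu : HarmOn u U) (hU : IsOpen U) (hUF : U ⊆ F)
    (hF : IsClosed F) (hc : ContinuousOn u F) (hFU : (F \ U).Nonempty) {z₀ : ℂ} (hz₀ : z₀ ∈ F)
    (hmax : IsMaxOn u F z₀) : ∃ x ∈ F \ U, u x = u z₀ := by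
  by_contra! hne
  set A := F ∩ u ⁻¹' {u z₀}
  have hAU : A ⊆ U := fun a ⟨haF, ha⟩ => by_contra fun haU => hne a ⟨haF, haU⟩ ha
  have hA_closed : IsClosed A := hc.preimage_isClosed_of_isClosed hF isClosed_singleton
  have hA_open : IsOpen A := by
    refine isOpen_iff_mem_nhds.2 fun a ha => ?_
    have hloc : IsLocalMax u a := by
      filter_upwards [hU.mem_nhds (hAU ha)] with w hw
      exact (hmax (hUF hw)).trans_eq ha.2.symm
    filter_upwards [hu.eventually_eq_of_isLocalMax (hAU ha) hloc, hU.mem_nhds (hAU ha)]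
      with w hw hwU
    exact ⟨hUF hwU, hw.trans ha.2⟩
  have hA_univ : A = univ := IsClopen.eq_univ ⟨hA_closed, hA_open⟩ ⟨z₀, hz₀, rfl⟩
  obtain ⟨x, -, hxU⟩ := hFU
  exact hxU (hAU (hA_univ ▸ mem_univ x))

theorem exists_mem_diff_isMaxOn (hu : HarmOn u U) (hU : IsOpen U) (hUF : U ⊆ F)
    (hF : IsCompact F) (hc : ContinuousOn u F) (hFU : (F \ U).Nonempty) :
    ∃ x ∈ F \ U, IsMaxOn u F x := by
  obtain ⟨z₀, hz₀, hmax⟩ := hF.exists_isMaxOn (hFU.mono sdiff_subset) hc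
  obtain ⟨x, hx, hxz₀⟩ :=
    hu.exists_mem_diff_eq_of_isMaxOn hU hUF hF.isClosed hc hFU hz₀ hmax
  exact ⟨x, hx, fun w hw => (hmax hw).trans_eq hxz₀.symm⟩

-- Maximum principle for `u - ε log |· - q|` on the closed annulus `r ≤ |z - q| ≤ R`; for `R`
-- large the outer circle does not matter since `u` is bounded above.
theorem le_add_mul_log_of_forall_sphere_le (hu : HarmOn u (closedBall q r)ᶜ)
    (hc : Continuous u) (hbdd : BddAbove (range u)) (hr : 0 < r)
    (ht : ∀ x ∈ sphere q r, u x ≤ t) {z : ℂ} (hz : r ≤ dist z q) {ε : ℝ} (hε : 0 < ε) :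
    u z ≤ t + ε * (Real.log (dist z q) - Real.log r) := by
  obtain ⟨M, hM⟩ := hbdd
  set R := max (dist z q) (r * Real.exp ((M - t) / ε))
  have hrR : r ≤ R := hz.trans (le_max_left _ _)
  have hMR : M - t ≤ ε * (Real.log R - Real.log r) := by
    have hlog : Real.log r + (M - t) / ε ≤ Real.log R := by
      rw [← Real.log_exp ((M - t) / ε), ← Real.log_mul hr.ne' (Real.exp_ne_zero _)]
      exact Real.log_le_log (by positivity) (le_max_right _ _)
    rw [← div_le_iff₀' hε]
    linarith
  set v := fun w => u w - ε * Real.log (dist w q)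
  set F := closedBall q R ∩ (ball q r)ᶜ
  set U := ball q R ∩ (closedBall q r)ᶜ
  have hqU : (closedBall q r)ᶜ ⊆ {q}ᶜ := by
    simpa using (mem_closedBall_self hr.le : q ∈ closedBall q r)
  have hv : HarmOn v U :=
    (hu.sub ((harmOn_log_dist q).const_mul ε |>.mono hqU)).mono inter_subset_right
  have hUF : U ⊆ F := inter_subset_inter ball_subset_closedBall
    (compl_subset_compl.2 ball_subset_closedBall)
  have hdist : ∀ w ∈ F, r ≤ dist w q := fun w hw => not_lt.1 hw.2
  have hvc : ContinuousOn v F := hc.continuousOn.sub <| continuousOn_const.mul <|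
    (continuous_id.dist continuous_const).continuousOn.log fun w hw =>
      (hr.trans_le (hdist w hw)).ne'
  have hsphere : q + r ∈ F \ U := by
    have hq : dist (q + r) q = r := by simp [hr.le]
    exact ⟨⟨hq.trans_le hrR, not_lt.2 hq.ge⟩, fun h => h.2 hq.le⟩
  obtain ⟨x, ⟨hxF, hxU⟩, hxmax⟩ :=
    hv.exists_mem_diff_isMaxOn (isOpen_ball.inter isClosed_closedBall.isOpen_compl) hUF
      ((isCompact_closedBall q R).inter_right isOpen_ball.isClosed_compl) hvc ⟨_, hsphere⟩
  have hvx : v x ≤ t - ε * Real.log r := by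
    have hxr := hdist x hxF
    rcases not_and_or.1 hxU with hxR | hxr'
    · have hxdist : dist x q = R := le_antisymm hxF.1 (not_lt.1 hxR)
      have hxM : u x ≤ M := hM ⟨x, rfl⟩
      simp only [v, hxdist]
      linarith
    · have hxdist : dist x q = r := le_antisymm (not_not.1 hxr') hxr
      have hxt := ht x hxdist
      simp only [v, hxdist]
      linarith
  have hvz : v z ≤ v x := hxmax ⟨mem_closedBall.2 (le_max_left _ _), not_lt.2 hz⟩
  simp only [v] at hvz
  linarith

theorem le_of_forall_sphere_le (hu : HarmOn u (closedBall q r)ᶜ) (hc : Continuous u)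
    (hbdd : BddAbove (range u)) (hr : 0 < r) (ht : ∀ x ∈ sphere q r, u x ≤ t) {z : ℂ}
    (hz : r ≤ dist z q) : u z ≤ t := by
  have hlim : Tendsto (fun ε => t + ε * (Real.log (dist z q) - Real.log r)) (𝓝[>] 0) (𝓝 t) :=
    tendsto_nhdsWithin_of_tendsto_nhds <| Continuous.tendsto' (by fun_prop) _ _ (by simp)
  exact ge_of_tendsto hlim <| eventually_nhdsWithin_of_forall fun ε hε =>
    le_add_mul_log_of_forall_sphere_le hu hc hbdd hr ht hz hε

theorem le_of_forall_mem_le (hK : IsCompact K) (hKne : K.Nonempty) (hu : HarmOn u Kᶜ)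
    (hc : Continuous u) (hbdd : BddAbove (range u)) {N : ℝ} (hN : ∀ x ∈ K, u x ≤ N) (z : ℂ) :
    u z ≤ N := by
  obtain ⟨r, hr, hKr⟩ := hK.isBounded.subset_ball_lt 0 0
  obtain ⟨z₀, -, hz₀⟩ := (isCompact_closedBall (0 : ℂ) r).exists_isMaxOn
    ⟨0, mem_closedBall_self hr.le⟩ hc.continuousOn
  have hu' : HarmOn u (closedBall 0 r)ᶜ :=
    hu.mono (compl_subset_compl.2 (hKr.trans ball_subset_closedBall))
  have hmax : IsMaxOn u univ z₀ := by
    intro w _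
    rcases le_or_gt (dist w 0) r with hw | hw
    · exact hz₀ (mem_closedBall.2 hw)
    · exact hu'.le_of_forall_sphere_le hc hbdd hr
        (fun x hx => hz₀ (sphere_subset_closedBall hx)) hw.le
  obtain ⟨x, ⟨-, hxK⟩, hx⟩ := hu.exists_mem_diff_eq_of_isMaxOn hK.isClosed.isOpen_compl
    (subset_univ _) isClosed_univ hc.continuousOn (by simpa using hKne) (mem_univ z₀) hmax
  exact (hmax (mem_univ z)).trans (hx ▸ hN x (not_not.1 hxK))

theorem exists_mem_forall_abs_le (hK : IsCompact K) (hKne : K.Nonempty) (hu : HarmOn u Kᶜ)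
    (hc : Continuous u) {M : ℝ} (hM : ∀ z, |u z| ≤ M) : ∃ p ∈ K, ∀ z, |u z| ≤ |u p| := by
  obtain ⟨p, hpK, hp⟩ := hK.exists_isMaxOn hKne (continuous_abs.comp hc).continuousOn
  refine ⟨p, hpK, fun z => abs_le.2 ⟨?_, ?_⟩⟩
  · exact neg_le.1 <| hu.neg.le_of_forall_mem_le hK hKne hc.neg
      ⟨M, by rintro _ ⟨w, rfl⟩; exact (neg_le_abs _).trans (hM w)⟩
      (fun x hx => (neg_le_abs (u x)).trans (hp hx)) z
  · exact hu.le_of_forall_mem_le hK hKne hc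
      ⟨M, by rintro _ ⟨w, rfl⟩; exact (le_abs_self _).trans (hM w)⟩
      (fun x hx => (le_abs_self (u x)).trans (hp hx)) z

end HarmOn

theorem statement19_general (c₁ d₁ c₂ d₂ : ℝ) (h₁ : c₁ < d₁) (h₂ : c₂ < d₂)
    (u₁ u₂ : ℂ → ℝ)
    (hu₁harm : HarmOn u₁ ((fun t : ℝ => (t : ℂ)) '' Set.Icc c₁ d₁)ᶜ)
    (hu₂harm : HarmOn u₂ ((fun t : ℝ => (t : ℂ)) '' Set.Icc c₂ d₂)ᶜ)
    (hu₁cont : Continuous u₁) (hu₂cont : Continuous u₂)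
    (hu₁bdd : ∃ M : ℝ, ∀ z : ℂ, |u₁ z| ≤ M)
    (hu₂bdd : ∃ M : ℝ, ∀ z : ℂ, |u₂ z| ≤ M)
    (hb₁ : ∀ x ∈ Set.Icc c₁ d₁, 2 * u₁ (x : ℂ) - u₂ (x : ℂ) = 0)
    (hb₂ : ∀ x ∈ Set.Icc c₂ d₂, -u₁ (x : ℂ) + 2 * u₂ (x : ℂ) = 0) :
    ∀ z : ℂ, u₁ z = 0 ∧ u₂ z = 0 := by
  obtain ⟨M₁, hM₁⟩ := hu₁bdd
  obtain ⟨M₂, hM₂⟩ := hu₂bdd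
  obtain ⟨_, ⟨x₁, hx₁, rfl⟩, hmax₁⟩ := hu₁harm.exists_mem_forall_abs_le
    (isCompact_Icc.image continuous_ofReal) ((nonempty_Icc.2 h₁.le).image _) hu₁cont hM₁
  obtain ⟨_, ⟨x₂, hx₂, rfl⟩, hmax₂⟩ := hu₂harm.exists_mem_forall_abs_le
    (isCompact_Icc.image continuous_ofReal) ((nonempty_Icc.2 h₂.le).image _) hu₂cont hM₂
  have hN₁ : 2 * |u₁ x₁| ≤ |u₂ x₂| := by
    have h := hmax₂ x₁
    rwa [show u₂ x₁ = 2 * u₁ x₁ by linarith [hb₁ x₁ hx₁], abs_mul, abs_two] at h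
  have hN₂ : 2 * |u₂ x₂| ≤ |u₁ x₁| := by
    have h := hmax₁ x₂
    rwa [show u₁ x₂ = 2 * u₂ x₂ by linarith [hb₂ x₂ hx₂], abs_mul, abs_two] at h
  have hN₁_zero : |u₁ x₁| = 0 := by linarith [abs_nonneg (u₂ x₂)]
  have hN₂_zero : |u₂ x₂| = 0 := by linarith [abs_nonneg (u₁ x₁)]
  exact fun z => ⟨abs_nonpos_iff.1 (hN₁_zero ▸ hmax₁ z), abs_nonpos_iff.1 (hN₂_zero ▸ hmax₂ z)⟩

/-- if `u₁` is bounded and harmonic on `ℂ̄∖Δ₁`, `u₂` is bounded and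
harmonic on `ℂ̄∖Δ₂` (`Δ₁, Δ₂` disjoint nondegenerate compact real intervals,
hence regular for the Dirichlet problem), both continuous up to the cuts, and
`2u₁ - u₂ = 0` on `Δ₁` and `-u₁ + 2u₂ = 0` on `Δ₂`, then `u₁ ≡ 0` and `u₂ ≡ 0`. -/
theorem statement19 (c₁ d₁ c₂ d₂ : ℝ) (h₁ : c₁ < d₁) (h₂ : c₂ < d₂)
    (hdisj : Disjoint (Set.Icc c₁ d₁) (Set.Icc c₂ d₂))
    (u₁ u₂ : ℂ → ℝ)
    (hu₁harm : HarmOn u₁ ((fun t : ℝ => (t : ℂ)) '' Set.Icc c₁ d₁)ᶜ)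
    (hu₂harm : HarmOn u₂ ((fun t : ℝ => (t : ℂ)) '' Set.Icc c₂ d₂)ᶜ)
    (hu₁cont : Continuous u₁) (hu₂cont : Continuous u₂)
    (hu₁bdd : ∃ M : ℝ, ∀ z : ℂ, |u₁ z| ≤ M)
    (hu₂bdd : ∃ M : ℝ, ∀ z : ℂ, |u₂ z| ≤ M)
    (hb₁ : ∀ x ∈ Set.Icc c₁ d₁, 2 * u₁ (x : ℂ) - u₂ (x : ℂ) = 0)
    (hb₂ : ∀ x ∈ Set.Icc c₂ d₂, -u₁ (x : ℂ) + 2 * u₂ (x : ℂ) = 0) :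
    ∀ z : ℂ, u₁ z = 0 ∧ u₂ z = 0 :=
  statement19_general c₁ d₁ c₂ d₂ h₁ h₂ u₁ u₂ hu₁harm hu₂harm hu₁cont hu₂cont hu₁bdd hu₂bdd hb₁ hb₂

end
end
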